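/- arXiv:2007.05208 — 4 statements merged into one kernel-verified Lean document; each statement's English description precedes it below -/
import Mathlib

section
/- For the LSV map f_ω restricted to its left branch, letting a_{-1} < b_{-1} ≤ 1/2 be points with images a = f_ω(a_{-1}), b = f_ω(b_{-1}), and ω ∈ [α, β] with β ≥ ω, one has (1+β)·log(b_{-1}/a_{-1}) + log((1+(ω+1)2^ω b_{-1}^ω)/(1+(ω+1)2^ω a_{-1}^ω)) ≤ (1+β)·log(f_ω(b_{-1})/f_ω(a_{-1})). -/
open Real Set

/-- Key distortion inequality for the left branch of the LSV map
`f_ω(x) = x(1 + 2^ω x^ω)`: for `0 < ω ≤ β` and `0 < a₋₁ ≤ b₋₁ ≤ 1/2`,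
`(1+β)·log(b₋₁/a₋₁) + log((1+(ω+1)2^ω b₋₁^ω)/(1+(ω+1)2^ω a₋₁^ω))
  ≤ (1+β)·log(f_ω(b₋₁)/f_ω(a₋₁))`. -/
theorem stmt_1 (ω β a b : ℝ) (hω : 0 < ω) (hωβ : ω ≤ β)
    (ha : 0 < a) (hab : a ≤ b) (hb : b ≤ 1 / 2) :
    (1 + β) * Real.log (b / a)
      + Real.log ((1 + (ω + 1) * 2 ^ ω * b ^ ω) / (1 + (ω + 1) * 2 ^ ω * a ^ ω))
    ≤ (1 + β) * Real.log ((b * (1 + 2 ^ ω * b ^ ω)) / (a * (1 + 2 ^ ω * a ^ ω))) := by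
  have hb0 : 0 < b := lt_of_lt_of_le ha hab
  have hc0 : (0:ℝ) < 2 ^ ω := Real.rpow_pos_of_pos two_pos ω
  set u : ℝ := 2 ^ ω * a ^ ω with hu
  set v : ℝ := 2 ^ ω * b ^ ω with hv
  have hu0 : 0 < u := mul_pos hc0 (Real.rpow_pos_of_pos ha ω)
  have hv0 : 0 < v := mul_pos hc0 (Real.rpow_pos_of_pos hb0 ω)
  have huv : u ≤ v :=
    mul_le_mul_of_nonneg_left (Real.rpow_le_rpow ha.le hab hω.le) hc0.le
  have h1u : (0:ℝ) < 1 + u := by linarith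
  have h1v : (0:ℝ) < 1 + v := by linarith
  have hku : (0:ℝ) < 1 + (ω + 1) * u := by nlinarith
  have hkv : (0:ℝ) < 1 + (ω + 1) * v := by nlinarith
  -- rewrite the RHS log
  have hsplit : Real.log ((b * (1 + v)) / (a * (1 + u)))
      = Real.log (b / a) + Real.log ((1 + v) / (1 + u)) := by
    rw [Real.log_div (by positivity) (by positivity),
        Real.log_div hb0.ne' ha.ne',
        Real.log_div h1v.ne' h1u.ne',
        Real.log_mul hb0.ne' h1v.ne',
        Real.log_mul ha.ne' h1u.ne']
    ring
  rw [hsplit, mul_add]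
  have key : Real.log ((1 + (ω + 1) * v) / (1 + (ω + 1) * u))
      ≤ (1 + ω) * Real.log ((1 + v) / (1 + u)) := by
    rw [← Real.log_rpow (by positivity)]
    apply Real.log_le_log (by positivity)
    have hs0 : (0:ℝ) ≤ (v - u) / (1 + u) := div_nonneg (by linarith) h1u.le
    have bern : 1 + (1 + ω) * ((v - u) / (1 + u))
        ≤ (1 + (v - u) / (1 + u)) ^ (1 + ω) :=
      one_add_mul_self_le_rpow_one_add (by linarith) (by linarith)
    have heq : 1 + (v - u) / (1 + u) = (1 + v) / (1 + u) := by
      field_simp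
      ring
    rw [heq] at bern
    refine le_trans ?_ bern
    rw [div_le_iff₀ hku]
    have h2 : (1 + (1 + ω) * ((v - u) / (1 + u))) * (1 + (ω + 1) * u)
        = ((1 + u) + (1 + ω) * (v - u)) * (1 + (ω + 1) * u) / (1 + u) := by
      field_simp
    rw [h2, le_div_iff₀ h1u]
    nlinarith [mul_nonneg (mul_nonneg hω.le hu0.le) (sub_nonneg.2 huv)]
  have hlognn : 0 ≤ Real.log ((1 + v) / (1 + u)) :=
    Real.log_nonneg (by rw [le_div_iff₀ h1u]; linarith)
  have : (1 + ω) * Real.log ((1 + v) / (1 + u))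
      ≤ (1 + β) * Real.log ((1 + v) / (1 + u)) := by
    apply mul_le_mul_of_nonneg_right (by linarith) hlognn
  have goalkey : Real.log ((1 + (ω + 1) * v) / (1 + (ω + 1) * u))
      ≤ (1 + β) * Real.log ((1 + v) / (1 + u)) := key.trans this
  have ha' : (ω + 1) * 2 ^ ω * a ^ ω = (ω + 1) * u := by rw [hu]; ring
  have hb' : (ω + 1) * 2 ^ ω * b ^ ω = (ω + 1) * v := by rw [hv]; ring
  rw [ha', hb']
  linarith
end

section
/- Define 𝒟(J) = (1+β)·log(sup J / inf J) for closed intervals J ⊂ (0,1]. Then for every ω ∈ [α,β] and every closed interval J ⊂ (0, 1/2)(1+2^ω(1/2)^ω) on which the left branch of f_ω is invertible, 𝒟(f_ω^{-1}(J)) + Dist(f_ω | f_ω^{-1}(J)) ≤ 𝒟(J), where Dist(f|J) = sup_{x,y∈J} log(f'(x)/f'(y)). -/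
open Real Set

/-- With `𝒟(J) = (1+β)·log(sup J/inf J)`, for any `ω ∈ [α,β]` and any closed
interval `J = [c,d] ⊂ (0, f_ω(1/2)]` in the image of the left branch
`f_ω(x) = x(1+2^ω x^ω)` with inverse branch `g`,
`𝒟(f_ω⁻¹ J) + Dist(f_ω | f_ω⁻¹ J) ≤ 𝒟(J)`, where the distortion is
`Dist(f|J) = sup_{x,y ∈ J} log (f'(x)/f'(y))` and `f_ω'(x) = 1+(ω+1)2^ω x^ω`. -/
theorem stmt_2 (α β ω c d : ℝ) (hα : 0 < α) (hαω : α ≤ ω) (hωβ : ω ≤ β)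
    (hc : 0 < c) (hcd : c ≤ d) (hd : d ≤ (1 / 2) * (1 + 2 ^ ω * (1 / 2 : ℝ) ^ ω))
    (g : ℝ → ℝ)  -- the inverse of the left branch of `f_ω` on `J = [c,d]`
    (hg : ∀ y ∈ Set.Icc c d, 0 < g y ∧ g y ≤ 1 / 2 ∧ g y * (1 + 2 ^ ω * (g y) ^ ω) = y)
    (hgmono : MonotoneOn g (Set.Icc c d)) :
    (1 + β) * Real.log (g d / g c) +
      sSup { z : ℝ | ∃ x ∈ g '' Set.Icc c d, ∃ y ∈ g '' Set.Icc c d,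
        z = Real.log ((1 + (ω + 1) * 2 ^ ω * x ^ ω) / (1 + (ω + 1) * 2 ^ ω * y ^ ω)) }
    ≤ (1 + β) * Real.log (d / c) := by
  have hω : 0 < ω := lt_of_lt_of_le hα hαω
  have hβ : 0 < β := lt_of_lt_of_le hω hωβ
  have hmemc : c ∈ Set.Icc c d := ⟨le_refl c, hcd⟩
  have hmemd : d ∈ Set.Icc c d := ⟨hcd, le_refl d⟩
  obtain ⟨hu, hu2, hcu⟩ := hg c hmemc
  obtain ⟨hv, hv2, hdv⟩ := hg d hmemd
  set u := g c with hudef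
  set v := g d with hvdef
  have huv : u ≤ v := hgmono hmemc hmemd hcd
  have h2 : (0:ℝ) < 2 ^ ω := Real.rpow_pos_of_pos two_pos ω
  set A := 2 ^ ω * u ^ ω with hA
  set B := 2 ^ ω * v ^ ω with hB
  have hApos : 0 < A := mul_pos h2 (Real.rpow_pos_of_pos hu ω)
  have hBpos : 0 < B := mul_pos h2 (Real.rpow_pos_of_pos hv ω)
  have hAB : A ≤ B :=
    mul_le_mul_of_nonneg_left (Real.rpow_le_rpow hu.le huv hω.le) h2.le
  have hd0 : 0 < d := lt_of_lt_of_le hc hcd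
  -- positivity of derivative values
  have hPpos : ∀ x : ℝ, 0 < x → 0 < 1 + (ω + 1) * 2 ^ ω * x ^ ω := by
    intro x hx
    have h1 : 0 < (ω + 1) * 2 ^ ω * x ^ ω :=
      mul_pos (mul_pos (by linarith) h2) (Real.rpow_pos_of_pos hx ω)
    linarith
  have hPmono : ∀ x y : ℝ, 0 ≤ x → x ≤ y →
      1 + (ω + 1) * 2 ^ ω * x ^ ω ≤ 1 + (ω + 1) * 2 ^ ω * y ^ ω := by
    intro x y hx hxy
    have := Real.rpow_le_rpow hx hxy hω.le
    have h1 : 0 ≤ (ω + 1) * 2 ^ ω := by positivity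
    nlinarith
  -- bound the sup
  have hsup : sSup { z : ℝ | ∃ x ∈ g '' Set.Icc c d, ∃ y ∈ g '' Set.Icc c d,
        z = Real.log ((1 + (ω + 1) * 2 ^ ω * x ^ ω) / (1 + (ω + 1) * 2 ^ ω * y ^ ω)) }
      ≤ Real.log ((1 + (ω + 1) * 2 ^ ω * v ^ ω) / (1 + (ω + 1) * 2 ^ ω * u ^ ω)) := by
    have hPu := hPpos u hu
    have hPv := hPpos v hv
    have hPuv := hPmono u v hu.le huv
    apply Real.sSup_le
    · rintro z ⟨x, ⟨p, hp, rfl⟩, y, ⟨q, hq, rfl⟩, rfl⟩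
      have hgp : 0 < g p := (hg p hp).1
      have hgq : 0 < g q := (hg q hq).1
      have hpl : u ≤ g p := hgmono hmemc hp hp.1
      have hpr : g p ≤ v := hgmono hp hmemd hp.2
      have hql : u ≤ g q := hgmono hmemc hq hq.1
      have hqr : g q ≤ v := hgmono hq hmemd hq.2
      rw [Real.log_div (ne_of_gt (hPpos _ hgp)) (ne_of_gt (hPpos _ hgq)),
        Real.log_div (ne_of_gt hPv) (ne_of_gt hPu)]
      have h1 : Real.log (1 + (ω + 1) * 2 ^ ω * (g p) ^ ω)
          ≤ Real.log (1 + (ω + 1) * 2 ^ ω * v ^ ω) :=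
        Real.log_le_log (hPpos _ hgp) (hPmono _ _ hgp.le hpr)
      have h2' : Real.log (1 + (ω + 1) * 2 ^ ω * u ^ ω)
          ≤ Real.log (1 + (ω + 1) * 2 ^ ω * (g q) ^ ω) :=
        Real.log_le_log hPu (hPmono _ _ hu.le hql)
      linarith
    · apply Real.log_nonneg
      rw [le_div_iff₀ hPu]
      linarith
  -- key inequality:  log((1+(ω+1)B)/(1+(ω+1)A)) ≤ (1+β) * log((1+B)/(1+A))
  have hAssocu : (ω + 1) * 2 ^ ω * u ^ ω = (ω + 1) * A := by rw [hA]; ring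
  have hAssocv : (ω + 1) * 2 ^ ω * v ^ ω = (ω + 1) * B := by rw [hB]; ring
  set p := ω + 1 with hpdef
  have hp1 : (1:ℝ) ≤ p := by linarith
  set s := (1 + B) / (1 + A) with hsdef
  have h1A : (0:ℝ) < 1 + A := by linarith
  have h1B : (0:ℝ) < 1 + B := by linarith
  have hs1 : 1 ≤ s := by rw [hsdef, le_div_iff₀ h1A]; linarith
  have hs0 : 0 < s := lt_of_lt_of_le one_pos hs1
  have hBs : 1 + B = s + s * A := by
    rw [hsdef]; field_simp
  have bern : 1 + p * (s - 1) ≤ s ^ p := by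
    have := one_add_mul_self_le_rpow_one_add (by linarith : (-1:ℝ) ≤ s - 1) hp1
    have hss : 1 + (s - 1) = s := by ring
    rwa [hss] at this
  have hsp : s ≤ s ^ p := by
    calc s = s ^ (1:ℝ) := (Real.rpow_one s).symm
    _ ≤ s ^ p := Real.rpow_le_rpow_of_exponent_le hs1 hp1
  have hspos : 0 < s ^ p := Real.rpow_pos_of_pos hs0 p
  have step1 : 1 + p * B ≤ s ^ p * (1 + p * A) := by
    have hB' : B = s - 1 + s * A := by linarith
    have h2' : p * (s * A) ≤ p * (s ^ p * A) :=
      mul_le_mul_of_nonneg_left (mul_le_mul_of_nonneg_right hsp hApos.le) (by linarith)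
    calc 1 + p * B = 1 + p * (s - 1) + p * (s * A) := by rw [hB']; ring
    _ ≤ s ^ p + p * (s ^ p * A) := by linarith
    _ = s ^ p * (1 + p * A) := by ring
  have hsβ : s ^ p ≤ s ^ (1 + β) := Real.rpow_le_rpow_of_exponent_le hs1 (by linarith)
  have h1pA : (0:ℝ) < 1 + p * A := by have := mul_pos (show (0:ℝ) < p by linarith) hApos; linarith
  have h1pB : (0:ℝ) < 1 + p * B := by have := mul_pos (show (0:ℝ) < p by linarith) hBpos; linarith
  have step2 : 1 + p * B ≤ s ^ (1 + β) * (1 + p * A) :=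
    le_trans step1 (mul_le_mul_of_nonneg_right hsβ h1pA.le)
  have hlog := Real.log_le_log h1pB step2
  rw [Real.log_mul (ne_of_gt (Real.rpow_pos_of_pos hs0 _)) (ne_of_gt h1pA),
    Real.log_rpow hs0] at hlog
  have key : Real.log ((1 + p * B) / (1 + p * A)) ≤ (1 + β) * Real.log s := by
    rw [Real.log_div (ne_of_gt h1pB) (ne_of_gt h1pA)]
    linarith
  -- assemble
  have hsup' : sSup { z : ℝ | ∃ x ∈ g '' Set.Icc c d, ∃ y ∈ g '' Set.Icc c d,
        z = Real.log ((1 + (ω + 1) * 2 ^ ω * x ^ ω) / (1 + (ω + 1) * 2 ^ ω * y ^ ω)) }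
      ≤ (1 + β) * Real.log s := by
    refine le_trans hsup ?_
    rw [hAssocu, hAssocv]
    exact key
  have hcval : c = u * (1 + A) := hcu.symm
  have hdval : d = v * (1 + B) := hdv.symm
  have hlogdc : Real.log (d / c)
      = Real.log v - Real.log u + (Real.log (1 + B) - Real.log (1 + A)) := by
    rw [hdval, hcval, Real.log_div (by positivity) (by positivity),
      Real.log_mul (ne_of_gt hv) (ne_of_gt h1B),
      Real.log_mul (ne_of_gt hu) (ne_of_gt h1A)]
    ring
  have hlogvu : Real.log (v / u) = Real.log v - Real.log u :=
    Real.log_div (ne_of_gt hv) (ne_of_gt hu)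
  have hlogs : Real.log s = Real.log (1 + B) - Real.log (1 + A) := by
    rw [hsdef, Real.log_div (ne_of_gt h1B) (ne_of_gt h1A)]
  rw [hlogdc, hlogvu]
  rw [hlogs] at hsup'
  linarith
end

section
/- There exists K > 0 (depending only on α, β) such that for every sequence ω = (ω_0, ω_1, …) ∈ [α,β]^ℕ, every interval I' ⊂ [1/2, 1], and every n ∈ ℕ, the composition f^n_ω = f_{ω_{n-1}} ∘ ⋯ ∘ f_{ω_0} of left branches has distortion on (f^n_ω)^{-1}(I') bounded by K·log(sup I'/inf I'). In fact one can take K = 1 + β. -/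
open Real Set

/-- Left branch of the LSV map: `f_ω(x) = x(1 + 2^ω x^ω)`. -/
noncomputable def lsvLeft (ω : ℝ) (x : ℝ) : ℝ := x * (1 + 2 ^ ω * x ^ ω)

/-- Composition `f^n_ω = f_{ω_{n-1}} ∘ ⋯ ∘ f_{ω_0}` of left branches. -/
noncomputable def lsvComp (ω : ℕ → ℝ) : ℕ → ℝ → ℝ
  | 0 => id
  | n + 1 => lsvLeft (ω n) ∘ lsvComp ω n

lemma lsvLeft_pos {ω x : ℝ} (hx : 0 < x) : 0 < lsvLeft ω x := by
  have h1 : (0:ℝ) < 2 ^ ω := rpow_pos_of_pos (by norm_num) _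
  have h2 : 0 ≤ x ^ ω := rpow_nonneg hx.le _
  unfold lsvLeft; positivity

lemma lsvLeft_mono {ω : ℝ} (hω : 0 ≤ ω) {x y : ℝ} (hx : 0 ≤ x) (hxy : x ≤ y) :
    lsvLeft ω x ≤ lsvLeft ω y := by
  have h1 : (0:ℝ) ≤ 2 ^ ω := (rpow_pos_of_pos (by norm_num) _).le
  have h2 : x ^ ω ≤ y ^ ω := rpow_le_rpow hx hxy hω
  have h3 : 0 ≤ x ^ ω := rpow_nonneg hx _
  unfold lsvLeft
  have h4 : 1 + 2 ^ ω * x ^ ω ≤ 1 + 2 ^ ω * y ^ ω := by nlinarith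
  have h5 : (0:ℝ) ≤ 1 + 2 ^ ω * x ^ ω := by nlinarith
  exact mul_le_mul hxy h4 h5 (hx.trans hxy)

lemma lsvLeft_hasDerivAt {ω x : ℝ} (hx : 0 < x) :
    HasDerivAt (lsvLeft ω) (1 + (1 + ω) * (2 ^ ω * x ^ ω)) x := by
  have h : HasDerivAt (fun z : ℝ => z + 2 ^ ω * z ^ (ω + 1))
      (1 + 2 ^ ω * ((ω + 1) * x ^ (ω + 1 - 1))) x := by
    exact (hasDerivAt_id x).add
      (((Real.hasDerivAt_rpow_const (Or.inl hx.ne')).const_mul _))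
  have heq : lsvLeft ω =ᶠ[nhds x] fun z : ℝ => z + 2 ^ ω * z ^ (ω + 1) := by
    filter_upwards [IsOpen.mem_nhds isOpen_Ioi hx] with z hz
    have hz : (0:ℝ) < z := hz
    unfold lsvLeft
    rw [Real.rpow_add_one hz.ne']
    ring
  have := h.congr_of_eventuallyEq heq
  refine this.congr_deriv ?_
  rw [show ω + 1 - 1 = ω by ring]
  ring

lemma lsvComp_pos {ω : ℕ → ℝ} {x : ℝ} (hx : 0 < x) (n : ℕ) : 0 < lsvComp ω n x := by
  induction n with
  | zero => exact hx
  | succ n ih => exact lsvLeft_pos ih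

lemma lsvComp_zero (ω : ℕ → ℝ) (n : ℕ) : lsvComp ω n 0 = 0 := by
  induction n with
  | zero => rfl
  | succ n ih => show lsvLeft (ω n) (lsvComp ω n 0) = 0; rw [ih]; simp [lsvLeft]

lemma lsvComp_nonneg' {ω : ℕ → ℝ} {x : ℝ} (hx : 0 ≤ x) (n : ℕ) : 0 ≤ lsvComp ω n x := by
  rcases hx.lt_or_eq with h | h
  · exact (lsvComp_pos h n).le
  · rw [← h, lsvComp_zero]

lemma lsvComp_mono {ω : ℕ → ℝ} (hω : ∀ i, 0 ≤ ω i) {x y : ℝ} (hx : 0 ≤ x) (hxy : x ≤ y)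
    (n : ℕ) : lsvComp ω n x ≤ lsvComp ω n y := by
  induction n with
  | zero => exact hxy
  | succ n ih =>
    have hx' : 0 ≤ lsvComp ω n x := lsvComp_nonneg' hx n
    exact lsvLeft_mono (hω n) hx' ih

/-- product formula -/
lemma lsvComp_eq (ω : ℕ → ℝ) (x : ℝ) (n : ℕ) :
    lsvComp ω n x = x * ∏ i ∈ Finset.range n, (1 + 2 ^ (ω i) * (lsvComp ω i x) ^ (ω i)) := by
  induction n with
  | zero => simp [lsvComp]
  | succ n ih =>
    rw [Finset.prod_range_succ]
    show lsvLeft (ω n) (lsvComp ω n x) = _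
    unfold lsvLeft
    rw [ih]; ring

lemma lsvComp_hasDerivAt {ω : ℕ → ℝ} {x : ℝ} (hx : 0 < x) (n : ℕ) :
    HasDerivAt (lsvComp ω n)
      (∏ i ∈ Finset.range n, (1 + (1 + ω i) * (2 ^ (ω i) * (lsvComp ω i x) ^ (ω i)))) x := by
  induction n with
  | zero => simpa [lsvComp] using hasDerivAt_id x
  | succ n ih =>
    rw [Finset.prod_range_succ]
    have h1 := lsvLeft_hasDerivAt (ω := ω n) (x := lsvComp ω n x) (lsvComp_pos hx n)
    have := h1.comp x ih
    rw [mul_comm] at this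
    exact this

lemma key_hasDerivAt (c : ℝ) (hc : 1 ≤ c) {z : ℝ} (hz : 0 ≤ z) :
    HasDerivAt (fun z : ℝ => c * Real.log (1 + z) - Real.log (1 + c * z))
      (c * (1 + z)⁻¹ - (1 + c * z)⁻¹ * c) z := by
  have h1 : (0:ℝ) < 1 + z := by linarith
  have h2 : (0:ℝ) < 1 + c * z := by nlinarith
  have d1 : HasDerivAt (fun z : ℝ => Real.log (1 + z)) ((1 + z)⁻¹ * 1) z :=
    (Real.hasDerivAt_log h1.ne').comp z ((hasDerivAt_id z).const_add 1)
  have d2 : HasDerivAt (fun z : ℝ => Real.log (1 + c * z)) ((1 + c * z)⁻¹ * c) z := by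
    have := (Real.hasDerivAt_log h2.ne').comp z (((hasDerivAt_id z).const_mul c).const_add 1)
    exact this.congr_deriv (by ring)
  exact ((d1.const_mul c).sub d2).congr_deriv (by ring)

lemma key_log {c : ℝ} (hc : 1 ≤ c) {s t : ℝ} (hs : 0 ≤ s) (hst : s ≤ t) :
    Real.log (1 + c * t) - Real.log (1 + c * s) ≤
      c * (Real.log (1 + t) - Real.log (1 + s)) := by
  set F : ℝ → ℝ := fun z => c * Real.log (1 + z) - Real.log (1 + c * z) with hF
  have hmono : MonotoneOn F (Ici (0:ℝ)) := by
    apply monotoneOn_of_deriv_nonneg (convex_Ici 0)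
    · intro z hz
      simp only [mem_Ici] at hz
      exact ((key_hasDerivAt c hc hz).differentiableAt.continuousAt).continuousWithinAt
    · intro z hz
      rw [interior_Ici, mem_Ioi] at hz
      exact ((key_hasDerivAt c hc (le_of_lt hz)).differentiableAt).differentiableWithinAt
    · intro z hz
      rw [interior_Ici, mem_Ioi] at hz
      rw [(key_hasDerivAt c hc hz.le).deriv]
      have h1 : (0:ℝ) < 1 + z := by linarith
      have h2 : (0:ℝ) < 1 + c * z := by nlinarith
      have h3 : 1 + z ≤ 1 + c * z := by nlinarith
      have := inv_anti₀ h1 h3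
      have hc0 : (0:ℝ) ≤ c := by linarith
      nlinarith [mul_le_mul_of_nonneg_left this hc0]
  have := hmono (mem_Ici.mpr hs) (mem_Ici.mpr (hs.trans hst)) hst
  simp only [hF] at this
  linarith

lemma prod_pos_fac {ω : ℕ → ℝ} (hω : ∀ i, 0 ≤ ω i) {x : ℝ} (hx : 0 ≤ x) (i : ℕ) :
    0 < 1 + (1 + ω i) * (2 ^ (ω i) * (lsvComp ω i x) ^ (ω i)) := by
  have h1 : (0:ℝ) ≤ 2 ^ (ω i) := (rpow_pos_of_pos (by norm_num) _).le
  have h2 : (0:ℝ) ≤ (lsvComp ω i x) ^ (ω i) := rpow_nonneg (lsvComp_nonneg' hx i) _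
  have h3 : 0 ≤ (1 + ω i) * (2 ^ (ω i) * (lsvComp ω i x) ^ (ω i)) :=
    mul_nonneg (by linarith [hω i]) (mul_nonneg h1 h2)
  linarith

lemma main_est {β : ℝ} {ω : ℕ → ℝ} (hω : ∀ i, 0 ≤ ω i) (hωβ : ∀ i, ω i ≤ β)
    {x y : ℝ} (hx : 0 < x) (hxy : x ≤ y) (n : ℕ) :
    Real.log (∏ i ∈ Finset.range n, (1 + (1 + ω i) * (2 ^ (ω i) * (lsvComp ω i y) ^ (ω i))))
      - Real.log (∏ i ∈ Finset.range n, (1 + (1 + ω i) * (2 ^ (ω i) * (lsvComp ω i x) ^ (ω i))))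
    ≤ (1 + β) * (Real.log (lsvComp ω n y) - Real.log (lsvComp ω n x)) := by
  have hy : 0 < y := hx.trans_le hxy
  set s : ℕ → ℝ := fun i => 2 ^ (ω i) * (lsvComp ω i x) ^ (ω i) with hs_def
  set t : ℕ → ℝ := fun i => 2 ^ (ω i) * (lsvComp ω i y) ^ (ω i) with ht_def
  have h2pos : ∀ i, (0:ℝ) < 2 ^ (ω i) := fun i => rpow_pos_of_pos (by norm_num) _
  have hs0 : ∀ i, 0 ≤ s i := fun i =>
    mul_nonneg (h2pos i).le (rpow_nonneg (lsvComp_nonneg' hx.le i) _)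
  have hst : ∀ i, s i ≤ t i := fun i => by
    have := rpow_le_rpow (lsvComp_nonneg' hx.le i) (lsvComp_mono hω hx.le hxy i) (hω i)
    exact mul_le_mul_of_nonneg_left this (h2pos i).le
  have ht0 : ∀ i, 0 ≤ t i := fun i => (hs0 i).trans (hst i)
  have hβ0 : (0:ℝ) ≤ 1 + β := by have := (hω 0).trans (hωβ 0); linarith
  -- log of products = sums of logs
  have hfacx : ∀ i ∈ Finset.range n, (1 + (1 + ω i) * s i) ≠ 0 := fun i _ =>
    (prod_pos_fac hω hx.le i).ne'
  have hfacy : ∀ i ∈ Finset.range n, (1 + (1 + ω i) * t i) ≠ 0 := fun i _ =>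
    (prod_pos_fac hω hy.le i).ne'
  rw [Real.log_prod hfacy, Real.log_prod hfacx]
  have key : ∀ i ∈ Finset.range n,
      Real.log (1 + (1 + ω i) * t i) - Real.log (1 + (1 + ω i) * s i)
        ≤ (1 + β) * (Real.log (1 + t i) - Real.log (1 + s i)) := by
    intro i _
    have hc : (1:ℝ) ≤ 1 + ω i := by have := hω i; linarith
    have h1 := key_log hc (hs0 i) (hst i)
    have hlog : 0 ≤ Real.log (1 + t i) - Real.log (1 + s i) := by
      have : Real.log (1 + s i) ≤ Real.log (1 + t i) :=
        Real.log_le_log (by linarith [hs0 i]) (by linarith [hst i])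
      linarith
    have hcb : 1 + ω i ≤ 1 + β := by have := hωβ i; linarith
    nlinarith
  have hsum : ∑ i ∈ Finset.range n, Real.log (1 + (1 + ω i) * t i)
      - ∑ i ∈ Finset.range n, Real.log (1 + (1 + ω i) * s i)
      ≤ (1 + β) * (∑ i ∈ Finset.range n, Real.log (1 + t i)
          - ∑ i ∈ Finset.range n, Real.log (1 + s i)) := by
    rw [← Finset.sum_sub_distrib, ← Finset.sum_sub_distrib, Finset.mul_sum]
    exact Finset.sum_le_sum key
  -- identify the sums of log(1+t) with log of lsvComp
  have hlogy : Real.log (lsvComp ω n y)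
      = Real.log y + ∑ i ∈ Finset.range n, Real.log (1 + t i) := by
    rw [lsvComp_eq, Real.log_mul hy.ne' , Real.log_prod]
    · intro i _
      have : (0:ℝ) < 1 + t i := by linarith [ht0 i]
      exact this.ne'
    · refine (Finset.prod_pos ?_).ne'
      intro i _
      have : (0:ℝ) < 1 + t i := by linarith [ht0 i]
      exact this
  have hlogx : Real.log (lsvComp ω n x)
      = Real.log x + ∑ i ∈ Finset.range n, Real.log (1 + s i) := by
    rw [lsvComp_eq, Real.log_mul hx.ne', Real.log_prod]
    · intro i _
      have : (0:ℝ) < 1 + s i := by linarith [hs0 i]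
      exact this.ne'
    · refine (Finset.prod_pos ?_).ne'
      intro i _
      have : (0:ℝ) < 1 + s i := by linarith [hs0 i]
      exact this
  have hxy_log : Real.log x ≤ Real.log y := Real.log_le_log hx hxy
  nlinarith [hsum]

lemma D_mono {ω : ℕ → ℝ} (hω : ∀ i, 0 ≤ ω i) {x y : ℝ} (hx : 0 ≤ x) (hxy : x ≤ y) (n : ℕ) :
    ∏ i ∈ Finset.range n, (1 + (1 + ω i) * (2 ^ (ω i) * (lsvComp ω i x) ^ (ω i)))
      ≤ ∏ i ∈ Finset.range n, (1 + (1 + ω i) * (2 ^ (ω i) * (lsvComp ω i y) ^ (ω i))) := by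
  refine Finset.prod_le_prod (fun i _ => (prod_pos_fac hω hx i).le) (fun i _ => ?_)
  have h2 : (0:ℝ) ≤ 2 ^ (ω i) := (rpow_pos_of_pos (by norm_num) _).le
  have hr : (lsvComp ω i x) ^ (ω i) ≤ (lsvComp ω i y) ^ (ω i) :=
    rpow_le_rpow (lsvComp_nonneg' hx i) (lsvComp_mono hω hx hxy i) (hω i)
  have hc : (0:ℝ) ≤ 1 + ω i := by linarith [hω i]
  have := mul_le_mul_of_nonneg_left (mul_le_mul_of_nonneg_left hr h2) hc
  linarith

/-- Uniform distortion bound: there is `K > 0` (one may take `K = 1+β`) such that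
for every sequence `ω ∈ [α,β]^ℕ`, every interval `I' = [u,v] ⊆ [1/2,1]` and every
`n`, the distortion of `f^n_ω` on `(f^n_ω)⁻¹(I') ∩ [0,1/2)` is bounded by
`K·log(sup I'/inf I')`. -/
theorem stmt_3 (α β : ℝ) (hα : 0 < α) (hαβ : α ≤ β) :
    ∃ K > 0, K = 1 + β ∧
      ∀ (ω : ℕ → ℝ), (∀ i, ω i ∈ Set.Icc α β) →
      ∀ (u v : ℝ), 1 / 2 ≤ u → u ≤ v → v ≤ 1 →
      ∀ n : ℕ,
        sSup { z : ℝ |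
          ∃ x ∈ (lsvComp ω n) ⁻¹' (Set.Icc u v) ∩ Set.Ico 0 (1 / 2 : ℝ),
          ∃ y ∈ (lsvComp ω n) ⁻¹' (Set.Icc u v) ∩ Set.Ico 0 (1 / 2 : ℝ),
            z = Real.log (deriv (lsvComp ω n) x / deriv (lsvComp ω n) y) }
        ≤ K * Real.log (v / u) := by
  refine ⟨1 + β, by linarith, rfl, ?_⟩
  intro ω hω u v hu huv hv n
  have hβ0 : (0:ℝ) < 1 + β := by linarith
  have hu0 : (0:ℝ) < u := by linarith
  have hv0 : (0:ℝ) < v := by linarith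
  have hω0 : ∀ i, 0 ≤ ω i := fun i => hα.le.trans (hω i).1
  have hωβ : ∀ i, ω i ≤ β := fun i => (hω i).2
  have hRHS : 0 ≤ (1 + β) * Real.log (v / u) := by
    have : (1:ℝ) ≤ v / u := (one_le_div hu0).mpr huv
    exact mul_nonneg hβ0.le (Real.log_nonneg this)
  refine Real.sSup_le ?_ hRHS
  rintro z ⟨x, ⟨hxp, hx0, _⟩, y, ⟨hyp, hy0, _⟩, rfl⟩
  simp only [mem_preimage, mem_Icc] at hxp hyp
  -- positivity of x and y
  have hxpos : 0 < x := by
    rcases hx0.lt_or_eq with h | h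
    · exact h
    · exfalso; rw [← h, lsvComp_zero] at hxp; linarith [hxp.1]
  have hypos : 0 < y := by
    rcases hy0.lt_or_eq with h | h
    · exact h
    · exfalso; rw [← h, lsvComp_zero] at hyp; linarith [hyp.1]
  set D : ℝ → ℝ := fun w => ∏ i ∈ Finset.range n,
      (1 + (1 + ω i) * (2 ^ (ω i) * (lsvComp ω i w) ^ (ω i))) with hD
  have hdx : deriv (lsvComp ω n) x = D x := (lsvComp_hasDerivAt hxpos n).deriv
  have hdy : deriv (lsvComp ω n) y = D y := (lsvComp_hasDerivAt hypos n).deriv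
  have hDxpos : 0 < D x := Finset.prod_pos (fun i _ => prod_pos_fac hω0 hxpos.le i)
  have hDypos : 0 < D y := Finset.prod_pos (fun i _ => prod_pos_fac hω0 hypos.le i)
  rw [hdx, hdy, Real.log_div hDxpos.ne' hDypos.ne']
  rw [Real.log_div hv0.ne' hu0.ne']
  -- bound log(F x) and log(F y)
  have hlogbound : ∀ w : ℝ, u ≤ lsvComp ω n w → lsvComp ω n w ≤ v →
      Real.log u ≤ Real.log (lsvComp ω n w) ∧ Real.log (lsvComp ω n w) ≤ Real.log v :=
    fun w h1 h2 => ⟨Real.log_le_log hu0 h1, Real.log_le_log (by linarith) h2⟩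
  obtain ⟨hlx1, hlx2⟩ := hlogbound x hxp.1 hxp.2
  obtain ⟨hly1, hly2⟩ := hlogbound y hyp.1 hyp.2
  rcases le_total x y with hxy | hxy
  · -- D x ≤ D y, so log D x - log D y ≤ 0
    have := D_mono hω0 hxpos.le hxy n
    have hlog : Real.log (D x) ≤ Real.log (D y) := Real.log_le_log hDxpos this
    have h0 : 0 ≤ (1 + β) * (Real.log v - Real.log u) := mul_nonneg hβ0.le (by linarith)
    linarith
  · -- y ≤ x : apply main_est
    have h := main_est hω0 hωβ hypos hxy n
    have hfin : Real.log (lsvComp ω n x) - Real.log (lsvComp ω n y)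
        ≤ Real.log v - Real.log u := by linarith
    nlinarith [h, hfin]
end

section
/- Let ν_{α,ε} be the probability measure on [α,∞) with density ε·α^ε / t^{ε+1} (α > 0, ε > 0). For x ∈ (0, 1/2), define Γ_x(γ) = f_γ(x) = x(1 + (2x)^γ) and let P(x,·) = (Γ_x)_* ν_{α,ε} be the pushforward. Then P(x,·) is absolutely continuous on (x, f_α(x)] with density p_x(y) = ε·α^ε·(log(1/(2x)))^ε / [ (log(x/(y−x)))^{1+ε} (y−x) ], and p_x(y) = 0 outside [x, f_α(x)]. -/
open MeasureTheory Real Set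

private lemma lintegral_image_1d {s : Set ℝ} {f f' : ℝ → ℝ} (hs : MeasurableSet s)
    (hf' : ∀ x ∈ s, HasDerivWithinAt f (f' x) s x) (hf : Set.InjOn f s) (g : ℝ → ENNReal) :
    ∫⁻ x in f '' s, g x = ∫⁻ x in s, ENNReal.ofReal |f' x| * g (f x) := by
  simpa only [ContinuousLinearMap.det_toSpanSingleton] using
    lintegral_image_eq_lintegral_abs_det_fderiv_mul volume hs
      (fun x hx => (hf' x hx).hasFDerivWithinAt) hf g

/-- The power-law measure `ν_{α,ε}` on `[α,∞)` with density `ε α^ε / t^{ε+1}`. -/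
noncomputable def nuPower (α ε : ℝ) : Measure ℝ :=
  volume.withDensity (fun t =>
    ENNReal.ofReal (if α ≤ t then ε * α ^ ε / t ^ (ε + 1) else 0))

/-- For `x ∈ (0,1/2)`, the pushforward of `ν_{α,ε}` under `γ ↦ f_γ(x) = x(1+(2x)^γ)`
is absolutely continuous with density
`p_x(y) = ε α^ε (log(1/(2x)))^ε / ((log(x/(y−x)))^{1+ε}(y−x))` on `(x, f_α(x)]`
and `0` elsewhere. -/
theorem stmt_10 (α ε : ℝ) (hα : 0 < α) (hε : 0 < ε)
    (x : ℝ) (hx0 : 0 < x) (hx : x < 1 / 2) :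
    Measure.map (fun γ : ℝ => x * (1 + (2 * x) ^ γ)) (nuPower α ε)
      = volume.withDensity (fun y =>
          ENNReal.ofReal
            (if y ∈ Set.Ioc x (x * (1 + (2 * x) ^ α)) then
              ε * α ^ ε * (Real.log (1 / (2 * x))) ^ ε
                / ((Real.log (x / (y - x))) ^ (1 + ε) * (y - x))
            else 0)) := by
  have h2x0 : (0:ℝ) < 2 * x := by linarith
  have h2x1 : 2 * x < 1 := by linarith
  have hlogc : Real.log (2 * x) < 0 := Real.log_neg h2x0 h2x1
  set L : ℝ := Real.log (1 / (2 * x)) with hL_def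
  have hL : L = -Real.log (2 * x) := by rw [hL_def, one_div, Real.log_inv]
  have hL0 : 0 < L := by rw [hL]; linarith
  set Γ : ℝ → ℝ := fun γ => x * (1 + (2 * x) ^ γ) with hΓ_def
  have hcont : Continuous fun γ : ℝ => (2 * x) ^ γ :=
    continuous_iff_continuousAt.2 fun γ => Real.continuousAt_const_rpow h2x0.ne'
  have hΓcont : Continuous Γ := continuous_const.mul (continuous_const.add hcont)
  have hΓmeas : Measurable Γ := hΓcont.measurable
  have hanti : StrictAnti Γ := by
    intro a b hab
    have h := Real.rpow_lt_rpow_of_exponent_gt h2x0 h2x1 hab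
    simp only [hΓ_def]
    nlinarith
  have hΓderiv : ∀ γ : ℝ, HasDerivAt Γ (x * ((2 * x) ^ γ * Real.log (2 * x))) γ := by
    intro γ
    have h1 : HasDerivAt (fun γ : ℝ => (2 * x) ^ γ) ((2 * x) ^ γ * Real.log (2 * x)) γ :=
      (Real.hasStrictDerivAt_const_rpow h2x0 γ).hasDerivAt
    exact (h1.const_add 1).const_mul x
  have hu : ∀ γ : ℝ, 0 < (2 * x) ^ γ := fun γ => Real.rpow_pos_of_pos h2x0 γ
  have hmem : ∀ γ : ℝ, Γ γ ∈ Set.Ioc x (x * (1 + (2 * x) ^ α)) ↔ α ≤ γ := by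
    intro γ
    constructor
    · rintro ⟨-, h2⟩
      simp only [hΓ_def] at h2
      have : (2 * x) ^ γ ≤ (2 * x) ^ α := by nlinarith
      exact (Real.rpow_le_rpow_left_iff_of_base_lt_one h2x0 h2x1).1 this
    · intro hγ
      constructor
      · have := hu γ; simp only [hΓ_def]; nlinarith
      · have : (2 * x) ^ γ ≤ (2 * x) ^ α :=
          Real.rpow_le_rpow_of_exponent_ge h2x0 h2x1.le hγ
        simp only [hΓ_def]; nlinarith
  ext s hs
  rw [Measure.map_apply hΓmeas hs, nuPower, withDensity_apply _ (hΓmeas hs),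
    withDensity_apply _ hs]
  have hrw1 : ∀ γ : ℝ,
      ENNReal.ofReal (if α ≤ γ then ε * α ^ ε / γ ^ (ε + 1) else 0)
        = (Set.Ici α).indicator (fun γ => ENNReal.ofReal (ε * α ^ ε / γ ^ (ε + 1))) γ := by
    intro γ
    by_cases h : α ≤ γ <;> simp [Set.indicator_apply, h]
  have hrw2 : ∀ y : ℝ,
      ENNReal.ofReal (if y ∈ Set.Ioc x (x * (1 + (2 * x) ^ α)) then
            ε * α ^ ε * L ^ ε / ((Real.log (x / (y - x))) ^ (1 + ε) * (y - x)) else 0)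
        = (Set.Ioc x (x * (1 + (2 * x) ^ α))).indicator
            (fun y => ENNReal.ofReal
              (ε * α ^ ε * L ^ ε / ((Real.log (x / (y - x))) ^ (1 + ε) * (y - x)))) y := by
    intro y
    by_cases h : y ∈ Set.Ioc x (x * (1 + (2 * x) ^ α)) <;> simp [Set.indicator_apply, h]
  simp only [hrw1, hrw2]
  rw [lintegral_indicator measurableSet_Ici, lintegral_indicator measurableSet_Ioc,
    Measure.restrict_restrict measurableSet_Ici, Measure.restrict_restrict measurableSet_Ioc]
  -- identify the image set
  have himg : Set.Ioc x (x * (1 + (2 * x) ^ α)) ∩ s = Γ '' (Set.Ici α ∩ Γ ⁻¹' s) := by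
    ext y
    constructor
    · rintro ⟨hy1, hy2⟩
      refine ⟨Real.logb (2 * x) ((y - x) / x), ?_, ?_⟩
      · have hyx : 0 < y - x := by linarith [hy1.1]
        have hpos : 0 < (y - x) / x := div_pos hyx hx0
        have hΓy : Γ (Real.logb (2 * x) ((y - x) / x)) = y := by
          simp only [hΓ_def]
          rw [Real.rpow_logb h2x0 (by linarith) hpos]
          field_simp
          ring
        constructor
        · rw [Set.mem_Ici, ← hmem, hΓy]; exact ⟨hy1.1, hy1.2⟩
        · rw [Set.mem_preimage, hΓy]; exact hy2
      · have hyx : 0 < y - x := by linarith [hy1.1]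
        have hpos : 0 < (y - x) / x := div_pos hyx hx0
        simp only [hΓ_def]
        rw [Real.rpow_logb h2x0 (by linarith) hpos]
        field_simp
        ring
    · rintro ⟨γ, ⟨hγ1, hγ2⟩, rfl⟩
      exact ⟨(hmem γ).2 hγ1, hγ2⟩
  rw [himg, lintegral_image_1d (measurableSet_Ici.inter (hΓmeas hs))
    (fun γ _ => (hΓderiv γ).hasDerivWithinAt) (hanti.injective.injOn) _]
  refine setLIntegral_congr_fun (measurableSet_Ici.inter (hΓmeas hs)) ?_
  rintro γ ⟨hγ, -⟩
  have hγpos : 0 < γ := lt_of_lt_of_le hα hγ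
  have huγ := hu γ
  have hyx : Γ γ - x = x * (2 * x) ^ γ := by simp only [hΓ_def]; ring
  have hlog : Real.log (x / (Γ γ - x)) = γ * L := by
    rw [hyx]
    rw [show x / (x * (2 * x) ^ γ) = ((2 * x) ^ γ)⁻¹ by field_simp]
    rw [Real.log_inv, Real.log_rpow h2x0, hL]
    ring
  have habs : |x * ((2 * x) ^ γ * Real.log (2 * x))| = x * (2 * x) ^ γ * L := by
    rw [abs_of_nonpos (by nlinarith [mul_neg_of_pos_of_neg (mul_pos hx0 huγ) hlogc]), hL]; ring
  beta_reduce
  rw [← ENNReal.ofReal_mul (abs_nonneg _), habs, hlog]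
  congr 1
  rw [Real.mul_rpow hγpos.le hL0.le, hyx]
  have hL1 : L ^ ((1:ℝ) + ε) = L * L ^ ε := by
    rw [Real.rpow_add hL0, Real.rpow_one]
  have hγ1 : γ ^ ((1:ℝ) + ε) = γ ^ (ε + 1) := by rw [add_comm]
  rw [hL1, hγ1]
  have h1 : (0:ℝ) < γ ^ (ε + 1) := Real.rpow_pos_of_pos hγpos _
  have h2 : (0:ℝ) < L ^ ε := Real.rpow_pos_of_pos hL0 _
  field_simp
end
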